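/- Let a ≠ 1 and α := b x_{-1} x_0 admissible (α ≠ a^n(a-1)/(1-a^n) for all n ≥ 1). Then for every admissible solution, x_{2k+2} = x_0 ∏_{i=0}^{k} h(2i+1) and x_{2k+1} = x_{-1} ∏_{i=0}^{k} h(2i) for all k ≥ 0, where h(n) = (a^n(1-a) + α(1-a^n))/(a^{n+1}(1-a) + α(1-a^{n+1})). -/

import Mathlib

/-!
With `P n = aⁿ(1 - a) + α(1 - aⁿ)` one has `P 0 = 1 - a` and `P (n + 1) = a P n + α(1 - a)`.
By induction, `b xₙ xₙ₋₁ = α(1 - a) / P n`, so the denominator of the recurrence is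
`a + b xₙ xₙ₋₁ = P (n + 1) / P n` and `xₙ₊₁ = xₙ₋₁ h(n)`; admissibility of `α` is exactly `P n ≠ 0`.
Iterating this two-step relation along the even and the odd indices gives the two products.
-/

open Finset

section
variable {K : Type*} [Field K]

noncomputable def recDenom (a α : K) (n : ℕ) : K := a ^ n * (1 - a) + α * (1 - a ^ n)

lemma recDenom_zero (a α : K) : recDenom a α 0 = 1 - a := by
  simp [recDenom]

lemma recDenom_succ (a α : K) (n : ℕ) :
    recDenom a α (n + 1) = a * recDenom a α n + α * (1 - a) := by
  simp only [recDenom]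
  ring

lemma recDenom_ne_zero {a α : K} (ha : a ≠ 1)
    (hadm : ∀ n : ℕ, 1 ≤ n → α ≠ a ^ n * (a - 1) / (1 - a ^ n)) (n : ℕ) :
    recDenom a α n ≠ 0 := by
  have ha' : 1 - a ≠ 0 := sub_ne_zero.mpr ha.symm
  intro hz
  rcases Nat.eq_zero_or_pos n with rfl | hn
  · exact ha' (by rwa [recDenom_zero] at hz)
  unfold recDenom at hz
  by_cases hpow : a ^ n = 1
  · simp [hpow, ha'] at hz
  · apply hadm n hn
    rw [eq_div_iff (sub_ne_zero.mpr (Ne.symm hpow))]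
    linear_combination hz

lemma add_div_recDenom {a α : K} {n : ℕ} (hP : recDenom a α n ≠ 0) :
    a + α * (1 - a) / recDenom a α n = recDenom a α (n + 1) / recDenom a α n := by
  rw [recDenom_succ]
  field_simp

variable {a b α : K} {x : ℤ → K}

lemma succ_eq_pred_mul_div_recDenom
    (hrec : ∀ n : ℕ, x (n + 1) = x (n - 1) / (a + b * x n * x (n - 1))) {n : ℕ}
    (hP : recDenom a α n ≠ 0) (hinv : b * x n * x (n - 1) = α * (1 - a) / recDenom a α n) :
    x (n + 1) = x (n - 1) * (recDenom a α n / recDenom a α (n + 1)) := by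
  rw [hrec, hinv, add_div_recDenom hP, div_div_eq_mul_div, mul_div_assoc]

lemma mul_mul_pred_eq_div_recDenom
    (hrec : ∀ n : ℕ, x (n + 1) = x (n - 1) / (a + b * x n * x (n - 1)))
    (hP : ∀ n, recDenom a α n ≠ 0) (h0 : b * x 0 * x (-1) = α) (n : ℕ) :
    b * x n * x (n - 1) = α * (1 - a) / recDenom a α n := by
  induction n with
  | zero =>
    have ha : 1 - a ≠ 0 := by simpa [recDenom_zero] using hP 0
    simp [recDenom_zero, h0, ha]
  | succ n ih =>
    push_cast
    rw [add_sub_cancel_right, succ_eq_pred_mul_div_recDenom hrec (hP n) ih]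
    calc b * (x (n - 1) * (recDenom a α n / recDenom a α (n + 1))) * x n
        = b * x n * x (n - 1) * (recDenom a α n / recDenom a α (n + 1)) := by ring
      _ = α * (1 - a) / recDenom a α (n + 1) := by
        rw [ih]
        field_simp [hP n, hP (n + 1)]

end

lemma eq_mul_prod_of_two_step {M : Type*} [CommMonoid M] {x : ℤ → M} {g : ℕ → M}
    (hstep : ∀ n : ℕ, x (n + 1) = x (n - 1) * g n) (r k : ℕ) :
    x (2 * k + r + 1) = x (r - 1) * ∏ i ∈ range (k + 1), g (2 * i + r) := by
  induction k with
  | zero => simpa using hstep r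
  | succ k ih =>
    have h := hstep (2 * k + r + 2)
    push_cast at h ⊢
    rw [show (2 : ℤ) * (k + 1) + r + 1 = 2 * k + r + 2 + 1 by ring, h,
      show (2 : ℤ) * k + r + 2 - 1 = 2 * k + r + 1 by ring, ih, prod_range_succ _ (k + 1),
      show 2 * (k + 1) + r = 2 * k + r + 2 by ring, mul_assoc]

theorem stmt_7 (a b : ℝ) (x : ℤ → ℝ) (α : ℝ) (h : ℕ → ℝ)
    (ha : a ≠ 1)
    (halpha : α = b * x (-1) * x 0)
    (hadm : ∀ n : ℕ, 1 ≤ n → α ≠ a ^ n * (a - 1) / (1 - a ^ n))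
    (hh : ∀ n : ℕ, h n =
      (a ^ n * (1 - a) + α * (1 - a ^ n)) / (a ^ (n + 1) * (1 - a) + α * (1 - a ^ (n + 1))))
    (hrec : ∀ n : ℕ, x ((n : ℤ) + 1) = x ((n : ℤ) - 1) / (a + b * x (n : ℤ) * x ((n : ℤ) - 1))) :
    ∀ k : ℕ,
      x (2 * (k : ℤ) + 2) = x 0 * ∏ i ∈ Finset.range (k + 1), h (2 * i + 1) ∧
      x (2 * (k : ℤ) + 1) = x (-1) * ∏ i ∈ Finset.range (k + 1), h (2 * i) := by
  have hP := recDenom_ne_zero ha hadm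
  have hinv := mul_mul_pred_eq_div_recDenom hrec hP (by rw [halpha]; ring)
  have hstep : ∀ n : ℕ, x (n + 1) = x (n - 1) * h n := fun n => by
    rw [hh n]
    exact succ_eq_pred_mul_div_recDenom hrec (hP n) (hinv n)
  intro k
  constructor
  · simpa [add_assoc, one_add_one_eq_two] using eq_mul_prod_of_two_step hstep 1 k
  · simpa using eq_mul_prod_of_two_step hstep 0 k
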